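/- Let m ≥ 1, ε > 0, λ > 0. Let h′ : ℝ × ℝᵐ × ℝᵐ → ℝ be continuously differentiable with h′ ≥ 0 and μ·∂_μh′(x,y,μ) = 2h′(x,y,μ). Set p(x,y,τ,μ) = τ² + h′(x,y,μ) and let V be the vector field V = 2τx²∂ₓ + 2τxμ·∂_μ − (2xh′ + x²∂ₓh′)∂_τ + x(∂_μh′·∂_y − ∂_yh′·∂_μ) on the region {x > 0}. Let χ, ρ, ψ : ℝ → [0, ∞) be continuously differentiable with χ′ ≥ 0, ρ′ ≤ 0, and χ supported in (√λ/3, ∞). Assume that x|∂ₓh′(x,y,μ)| ≤ 2h′(x,y,μ) at every point of {x > 0} where χ′(τ)ρ(x)ψ(p) ≠ 0. Define q(x,y,τ,μ) = x^{−ε}χ(τ)ρ(x)ψ(p). Then at every point with x > 0: V q ≤ −2ετ x^{1−ε} χ(τ)ρ(x)ψ(p) ≤ 0; in particular, at points where τ ≥ 2√λ/3 and χ(τ) = ρ(x) = ψ(p) = 1, one has V q ≤ −(4√λ ε/3) x^{1−ε}. -/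

import Mathlib

/-- `∂ₓh'`: the partial derivative of the metric coefficient in the boundary
defining variable. -/
noncomputable def hDx {m : ℕ} (h' : ℝ × (Fin m → ℝ) × (Fin m → ℝ) → ℝ)
    (a : ℝ) (y μ : Fin m → ℝ) : ℝ :=
  fderiv ℝ h' (a, y, μ) (1, 0, 0)

/-- `∂_{yᵢ}h'`. -/
noncomputable def hDy {m : ℕ} (h' : ℝ × (Fin m → ℝ) × (Fin m → ℝ) → ℝ)
    (a : ℝ) (y μ : Fin m → ℝ) (i : Fin m) : ℝ :=
  fderiv ℝ h' (a, y, μ) (0, Pi.single i 1, 0)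

/-- `∂_{μᵢ}h'`. -/
noncomputable def hDmu {m : ℕ} (h' : ℝ × (Fin m → ℝ) × (Fin m → ℝ) → ℝ)
    (a : ℝ) (y μ : Fin m → ℝ) (i : Fin m) : ℝ :=
  fderiv ℝ h' (a, y, μ) (0, 0, Pi.single i 1)

/-- The escape function `q(x,y,τ,μ) = x^{-ε} χ(τ) ρ(x) ψ(τ² + h'(x,y,μ))`. -/
noncomputable def escapeQ {m : ℕ} (ε : ℝ) (χ ρ ψ : ℝ → ℝ)
    (h' : ℝ × (Fin m → ℝ) × (Fin m → ℝ) → ℝ)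
    (z : ℝ × (Fin m → ℝ) × ℝ × (Fin m → ℝ)) : ℝ :=
  z.1 ^ (-ε) * χ z.2.2.1 * ρ z.1 * ψ (z.2.2.1 ^ 2 + h' (z.1, z.2.1, z.2.2.2))

/-- The Hamiltonian vector field
`V = 2τx²∂ₓ + 2τxμ·∂_μ − (2xh′ + x²∂ₓh′)∂_τ + x(∂_μh′·∂_y − ∂_yh′·∂_μ)`
of `p = τ² + h'` in scattering coordinates `(x, y, τ, μ)`. -/
noncomputable def hamVec {m : ℕ} (h' : ℝ × (Fin m → ℝ) × (Fin m → ℝ) → ℝ)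
    (z : ℝ × (Fin m → ℝ) × ℝ × (Fin m → ℝ)) :
    ℝ × (Fin m → ℝ) × ℝ × (Fin m → ℝ) :=
  (2 * z.2.2.1 * z.1 ^ 2,
   fun i => z.1 * hDmu h' z.1 z.2.1 z.2.2.2 i,
   -(2 * z.1 * h' (z.1, z.2.1, z.2.2.2) + z.1 ^ 2 * hDx h' z.1 z.2.1 z.2.2.2),
   fun i => 2 * z.2.2.1 * z.1 * z.2.2.2 i - z.1 * hDy h' z.1 z.2.1 z.2.2.2 i)

/-!
Since `V` is the Hamiltonian vector field of `p = τ² + h'`, it annihilates `p`: the rotation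
terms in `(y, μ)` cancel and Euler's relation `μ·∂_μh' = 2h'` balances the `∂_τ` component.
Hence `V` only differentiates the prefactor `x^{-ε}χ(τ)ρ(x)` of `q`, giving
`V q = x^{1-ε}(-2ετχρ + 2τxχρ' - (2h' + x∂ₓh')χ'ρ)ψ(p)`.
The first term is the claimed bound; the second is `≤ 0` because `ρ' ≤ 0` and `τχ(τ) ≥ 0`
(`χ` lives on `τ > √λ/3`), and the third is `≤ 0` because `x|∂ₓh'| ≤ 2h'` wherever `χ'ρψ ≠ 0`.
-/

open ContinuousLinearMap

theorem ContinuousLinearMap.apply_prod_eq_sum {𝕜 F ι : Type*} [NontriviallyNormedField 𝕜]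
    [NormedAddCommGroup F] [NormedSpace 𝕜 F] [Fintype ι] [DecidableEq ι]
    (D : (𝕜 × (ι → 𝕜) × (ι → 𝕜)) →L[𝕜] F) (vx : 𝕜) (vy vμ : ι → 𝕜) :
    D (vx, vy, vμ) = vx • D (1, 0, 0) + ∑ i, vy i • D (0, Pi.single i 1, 0)
      + ∑ i, vμ i • D (0, 0, Pi.single i 1) := by
  have hv : (vx, vy, vμ) = vx • ((1 : 𝕜), (0 : ι → 𝕜), (0 : ι → 𝕜))
      + ∑ i, vy i • ((0 : 𝕜), (Pi.single i 1 : ι → 𝕜), (0 : ι → 𝕜))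
      + ∑ i, vμ i • ((0 : 𝕜), (0 : ι → 𝕜), (Pi.single i 1 : ι → 𝕜)) := by
    refine Prod.ext ?_ (Prod.ext ?_ ?_) <;>
      simp [Prod.fst_sum, Prod.snd_sum, ← Pi.single_smul, Finset.univ_sum_single]
  rw [hv]
  simp only [map_add, map_sum, map_smul]

def lapSymbol {m : ℕ} (h' : ℝ × (Fin m → ℝ) × (Fin m → ℝ) → ℝ)
    (z : ℝ × (Fin m → ℝ) × ℝ × (Fin m → ℝ)) : ℝ :=
  z.2.2.1 ^ 2 + h' (z.1, z.2.1, z.2.2.2)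

section HamiltonianFlow

variable {m : ℕ} {h' : ℝ × (Fin m → ℝ) × (Fin m → ℝ) → ℝ} {ε a t : ℝ} {y μ : Fin m → ℝ}
  {χ ρ ψ : ℝ → ℝ}

theorem differentiableAt_lapSymbol {z : ℝ × (Fin m → ℝ) × ℝ × (Fin m → ℝ)}
    (hdiff : DifferentiableAt ℝ h' (z.1, z.2.1, z.2.2.2)) :
    DifferentiableAt ℝ (lapSymbol h') z := by
  unfold lapSymbol
  fun_prop

/-- The rotation terms `x(∂_μh'·∂_y − ∂_yh'·∂_μ)` cancel, and Euler's relation turns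
`2τxμ·∂_μh'` into `4τxh'`. -/
theorem fderiv_apply_hamVec_xyμ
    (hhom : ∑ i, μ i * hDmu h' a y μ i = 2 * h' (a, y, μ)) :
    fderiv ℝ h' (a, y, μ)
        ((hamVec h' (a, y, t, μ)).1, (hamVec h' (a, y, t, μ)).2.1,
          (hamVec h' (a, y, t, μ)).2.2.2) =
      2 * t * a ^ 2 * hDx h' a y μ + 4 * t * a * h' (a, y, μ) := by
  rw [ContinuousLinearMap.apply_prod_eq_sum]
  simp only [hamVec, smul_eq_mul]
  change 2 * t * a ^ 2 * hDx h' a y μ + ∑ i, a * hDmu h' a y μ i * hDy h' a y μ i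
    + ∑ i, (2 * t * a * μ i - a * hDy h' a y μ i) * hDmu h' a y μ i = _
  rw [add_assoc, ← Finset.sum_add_distrib,
    show 4 * t * a * h' (a, y, μ) = 2 * t * a * (2 * h' (a, y, μ)) by ring, ← hhom,
    Finset.mul_sum]
  congr 1
  exact Finset.sum_congr rfl fun i _ => by ring

theorem fderiv_lapSymbol_hamVec (hdiff : DifferentiableAt ℝ h' (a, y, μ))
    (hhom : ∑ i, μ i * hDmu h' a y μ i = 2 * h' (a, y, μ)) :
    fderiv ℝ (lapSymbol h') (a, y, t, μ) (hamVec h' (a, y, t, μ)) = 0 := by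
  have hid := hasFDerivAt_id (𝕜 := ℝ) ((a, y, t, μ) : ℝ × (Fin m → ℝ) × ℝ × (Fin m → ℝ))
  have hτ : HasFDerivAt (fun z : ℝ × (Fin m → ℝ) × ℝ × (Fin m → ℝ) => z.2.2.1) _ (a, y, t, μ) :=
    hid.snd.snd.fst
  have hproj : HasFDerivAt (fun z : ℝ × (Fin m → ℝ) × ℝ × (Fin m → ℝ) =>
      (z.1, z.2.1, z.2.2.2)) _ (a, y, t, μ) :=
    hid.fst.prodMk (hid.snd.fst.prodMk hid.snd.snd.snd)
  have hp : HasFDerivAt (lapSymbol h') _ (a, y, t, μ) :=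
    ((hasDerivAt_pow 2 t).comp_hasFDerivAt _ hτ :).add
      (hdiff.hasFDerivAt.comp (a, y, t, μ) hproj :)
  rw [hp.fderiv]
  simp only [add_apply, comp_apply, smul_apply, coe_fst', coe_snd', prod_apply, id_apply,
    smul_eq_mul]
  rw [fderiv_apply_hamVec_xyμ hhom]
  simp only [hamVec]
  ring


theorem fderiv_escapeQ_hamVec (ha : 0 < a) (hdiff : DifferentiableAt ℝ h' (a, y, μ))
    (hhom : ∑ i, μ i * hDmu h' a y μ i = 2 * h' (a, y, μ))
    (hχ : DifferentiableAt ℝ χ t) (hρ : DifferentiableAt ℝ ρ a)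
    (hψ : DifferentiableAt ℝ ψ (t ^ 2 + h' (a, y, μ))) :
    fderiv ℝ (escapeQ ε χ ρ ψ h') (a, y, t, μ) (hamVec h' (a, y, t, μ)) =
      a ^ (1 - ε) * (-2 * ε * t * χ t * ρ a + 2 * t * a * χ t * deriv ρ a
        - (2 * h' (a, y, μ) + a * hDx h' a y μ) * deriv χ t * ρ a)
        * ψ (t ^ 2 + h' (a, y, μ)) := by
  have hid := hasFDerivAt_id (𝕜 := ℝ) ((a, y, t, μ) : ℝ × (Fin m → ℝ) × ℝ × (Fin m → ℝ))
  have hx : HasFDerivAt (fun z : ℝ × (Fin m → ℝ) × ℝ × (Fin m → ℝ) => z.1) _ (a, y, t, μ) :=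
    hid.fst
  have hτ : HasFDerivAt (fun z : ℝ × (Fin m → ℝ) × ℝ × (Fin m → ℝ) => z.2.2.1) _ (a, y, t, μ) :=
    hid.snd.snd.fst
  have hf : HasFDerivAt (fun z : ℝ × (Fin m → ℝ) × ℝ × (Fin m → ℝ) =>
      z.1 ^ (-ε) * χ z.2.2.1 * ρ z.1) _ (a, y, t, μ) :=
    (((Real.hasDerivAt_rpow_const (Or.inl ha.ne')).comp_hasFDerivAt _ hx :).mul
      (hχ.hasDerivAt.comp_hasFDerivAt _ hτ :)).mul (hρ.hasDerivAt.comp_hasFDerivAt _ hx :)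
  have hg : HasFDerivAt (fun z => ψ (lapSymbol h' z)) _ (a, y, t, μ) :=
    hψ.hasDerivAt.comp_hasFDerivAt (a, y, t, μ)
      (differentiableAt_lapSymbol (z := (a, y, t, μ)) hdiff).hasFDerivAt
  have hq : HasFDerivAt (escapeQ ε χ ρ ψ h') _ (a, y, t, μ) := hf.mul hg
  rw [hq.fderiv]
  simp only [add_apply, smul_apply, comp_apply, coe_fst', coe_snd', id_apply, smul_eq_mul,
    fderiv_lapSymbol_hamVec hdiff hhom, mul_zero, zero_add]
  simp only [hamVec, Pi.mul_apply, Function.comp_apply]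
  have hexp : a ^ (1 - ε) = a * a ^ (-ε) := by
    rw [sub_eq_add_neg, Real.rpow_add ha, Real.rpow_one]
  rw [Real.rpow_sub_one ha.ne', hexp]
  field_simp
  ring

end HamiltonianFlow

theorem mul_apply_nonneg_of_support_subset_Ioi {f : ℝ → ℝ} {c : ℝ} (hc : 0 ≤ c)
    (hf : ∀ s, 0 ≤ f s) (hsupp : Function.support f ⊆ Set.Ioi c) (t : ℝ) : 0 ≤ t * f t := by
  by_cases ht : f t = 0
  · simp [ht]
  · have hct : c < t := hsupp ht
    exact mul_nonneg (hc.trans hct.le) (hf t)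

theorem mul_add_mul_nonneg_of_mul_abs_le {a b c d : ℝ} (hc : 0 ≤ c) (ha : 0 ≤ a)
    (h : c ≠ 0 → a * |d| ≤ b) : 0 ≤ c * (b + a * d) := by
  rcases hc.eq_or_lt with rfl | hc
  · simp
  · have hd : -(a * |d|) ≤ a * d := by nlinarith [neg_abs_le d]
    exact mul_nonneg hc.le (by linarith [h hc.ne'])

theorem stmt8_general (m : ℕ) (ε lam : ℝ) (hε : 0 < ε)
    (h' : ℝ × (Fin m → ℝ) × (Fin m → ℝ) → ℝ) (hC1 : ContDiff ℝ 1 h')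
    (hhom : ∀ (a : ℝ) (y μ : Fin m → ℝ),
      ∑ i, μ i * hDmu h' a y μ i = 2 * h' (a, y, μ))
    (χ ρ ψ : ℝ → ℝ)
    (hχ0 : ∀ s, 0 ≤ χ s) (hρ0 : ∀ s, 0 ≤ ρ s) (hψ0 : ∀ s, 0 ≤ ψ s)
    (hχC : ContDiff ℝ 1 χ) (hρC : ContDiff ℝ 1 ρ) (hψC : ContDiff ℝ 1 ψ)
    (hχ' : ∀ s, 0 ≤ deriv χ s) (hρ' : ∀ s, deriv ρ s ≤ 0)
    (hχsupp : Function.support χ ⊆ Set.Ioi (Real.sqrt lam / 3))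
    (hG : ∀ (a t : ℝ) (y μ : Fin m → ℝ), 0 < a →
      deriv χ t * ρ a * ψ (t ^ 2 + h' (a, y, μ)) ≠ 0 →
      a * |hDx h' a y μ| ≤ 2 * h' (a, y, μ)) :
    ∀ (a t : ℝ) (y μ : Fin m → ℝ), 0 < a →
      (fderiv ℝ (escapeQ ε χ ρ ψ h') (a, y, t, μ) (hamVec h' (a, y, t, μ)) ≤
        -2 * ε * t * a ^ (1 - ε) * χ t * ρ a * ψ (t ^ 2 + h' (a, y, μ)) ∧
       -2 * ε * t * a ^ (1 - ε) * χ t * ρ a * ψ (t ^ 2 + h' (a, y, μ)) ≤ 0) ∧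
      (2 * Real.sqrt lam / 3 ≤ t → χ t = 1 → ρ a = 1 →
        ψ (t ^ 2 + h' (a, y, μ)) = 1 →
        fderiv ℝ (escapeQ ε χ ρ ψ h') (a, y, t, μ) (hamVec h' (a, y, t, μ)) ≤
          -(4 * Real.sqrt lam * ε / 3) * a ^ (1 - ε)) := by
  intro a t y μ ha
  have hVq := fderiv_escapeQ_hamVec (ε := ε) ha (hC1.differentiable one_ne_zero _) (hhom a y μ)
    (hχC.differentiable one_ne_zero t) (hρC.differentiable one_ne_zero a)
    (hψC.differentiable one_ne_zero _)
  set P := ψ (t ^ 2 + h' (a, y, μ))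
  have hP : 0 ≤ P := hψ0 _
  have hA : 0 ≤ a ^ (1 - ε) := Real.rpow_nonneg ha.le _
  have htχ : 0 ≤ t * χ t :=
    mul_apply_nonneg_of_support_subset_Ioi (by positivity) hχ0 hχsupp t
  have hρterm : 0 ≤ a ^ (1 - ε) * (t * χ t) * a * P * -deriv ρ a := by
    have := neg_nonneg.2 (hρ' a)
    positivity
  have hχterm : 0 ≤ a ^ (1 - ε) *
      (deriv χ t * ρ a * P * (2 * h' (a, y, μ) + a * hDx h' a y μ)) :=
    mul_nonneg hA <| mul_add_mul_nonneg_of_mul_abs_le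
      (mul_nonneg (mul_nonneg (hχ' t) (hρ0 a)) hP) ha.le (hG a t y μ ha)
  have hbound : fderiv ℝ (escapeQ ε χ ρ ψ h') (a, y, t, μ) (hamVec h' (a, y, t, μ)) ≤
      -2 * ε * t * a ^ (1 - ε) * χ t * ρ a * P := by
    rw [hVq]
    linear_combination 2 * hρterm + hχterm
  refine ⟨⟨hbound, ?_⟩, fun ht hχ1 hρ1 hψ1 => ?_⟩
  · have := mul_nonneg (mul_nonneg (mul_nonneg (mul_nonneg hε.le htχ) hA) (hρ0 a)) hP
    linarith
  · rw [hχ1, hρ1, hψ1] at hbound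
    nlinarith [mul_le_mul_of_nonneg_right ht (mul_nonneg hε.le hA)]

/-- The escape function computation of Step 3 of the proof of Lemma 3.1: on
`{x > 0}`, the derivative of `q = x^{-ε}χ(τ)ρ(x)ψ(p)` along the Hamiltonian
vector field `V` of `p = τ² + h'` is bounded by `-2ετx^{1-ε}χρψ(p) ≤ 0`, and is
at most `-(4√λ ε/3)x^{1-ε}` where `τ ≥ 2√λ/3` and `χ(τ) = ρ(x) = ψ(p) = 1`. -/
theorem stmt8 (m : ℕ) (hm : 1 ≤ m) (ε lam : ℝ) (hε : 0 < ε) (hlam : 0 < lam)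
    (h' : ℝ × (Fin m → ℝ) × (Fin m → ℝ) → ℝ) (hC1 : ContDiff ℝ 1 h')
    (hpos : ∀ p, 0 ≤ h' p)
    (hhom : ∀ (a : ℝ) (y μ : Fin m → ℝ),
      ∑ i, μ i * hDmu h' a y μ i = 2 * h' (a, y, μ))
    (χ ρ ψ : ℝ → ℝ)
    (hχ0 : ∀ s, 0 ≤ χ s) (hρ0 : ∀ s, 0 ≤ ρ s) (hψ0 : ∀ s, 0 ≤ ψ s)
    (hχC : ContDiff ℝ 1 χ) (hρC : ContDiff ℝ 1 ρ) (hψC : ContDiff ℝ 1 ψ)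
    (hχ' : ∀ s, 0 ≤ deriv χ s) (hρ' : ∀ s, deriv ρ s ≤ 0)
    (hχsupp : Function.support χ ⊆ Set.Ioi (Real.sqrt lam / 3))
    (hG : ∀ (a t : ℝ) (y μ : Fin m → ℝ), 0 < a →
      deriv χ t * ρ a * ψ (t ^ 2 + h' (a, y, μ)) ≠ 0 →
      a * |hDx h' a y μ| ≤ 2 * h' (a, y, μ)) :
    ∀ (a t : ℝ) (y μ : Fin m → ℝ), 0 < a →
      (fderiv ℝ (escapeQ ε χ ρ ψ h') (a, y, t, μ) (hamVec h' (a, y, t, μ)) ≤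
        -2 * ε * t * a ^ (1 - ε) * χ t * ρ a * ψ (t ^ 2 + h' (a, y, μ)) ∧
       -2 * ε * t * a ^ (1 - ε) * χ t * ρ a * ψ (t ^ 2 + h' (a, y, μ)) ≤ 0) ∧
      (2 * Real.sqrt lam / 3 ≤ t → χ t = 1 → ρ a = 1 →
        ψ (t ^ 2 + h' (a, y, μ)) = 1 →
        fderiv ℝ (escapeQ ε χ ρ ψ h') (a, y, t, μ) (hamVec h' (a, y, t, μ)) ≤
          -(4 * Real.sqrt lam * ε / 3) * a ^ (1 - ε)) :=
  stmt8_general m ε lam hε h' hC1 hhom χ ρ ψ hχ0 hρ0 hψ0 hχC hρC hψC hχ' hρ' hχsupp hG
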